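/- Under the hypotheses of the exact penalty lemma, if t* minimizes F(t) = H(t) + M·G(t) over S^N with M > (K − L_H)/L_G, then t* ∈ {s₁,s₂}^N and t* also minimizes H over {s₁,s₂}^N. -/
import Mathlib


open BigOperators

/-- a minimizer of the penalized objective is two-valued and
minimizes H over the two-valued vectors. -/
theorem stmt_10 (N n : ℕ) (hn : 3 ≤ n) (s : Fin n → ℝ) (hs : StrictMono s)
    (H : (Fin N → ℝ) → ℝ) (K LH M : ℝ)
    (hK : ∀ t : Fin N → ℝ, (∀ i, t i = s ⟨0, by omega⟩ ∨ t i = s ⟨1, by omega⟩) → H t ≤ K)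
    (hLH : ∀ t : Fin N → ℝ, (∀ i, ∃ j, t i = s j) → LH ≤ H t)
    (hM : M > (K - LH) / ((s ⟨2, by omega⟩ - s ⟨0, by omega⟩) * (s ⟨2, by omega⟩ - s ⟨1, by omega⟩)))
    (tstar : Fin N → ℝ) (htstar : ∀ i, ∃ j, tstar i = s j)
    (hmin : ∀ t' : Fin N → ℝ, (∀ i, ∃ j, t' i = s j) →
      H tstar + M * ∑ i, (tstar i - s ⟨0, by omega⟩) * (tstar i - s ⟨1, by omega⟩) ≤
      H t' + M * ∑ i, (t' i - s ⟨0, by omega⟩) * (t' i - s ⟨1, by omega⟩)) :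
    (∀ i, tstar i = s ⟨0, by omega⟩ ∨ tstar i = s ⟨1, by omega⟩) ∧
    (∀ t' : Fin N → ℝ, (∀ i, t' i = s ⟨0, by omega⟩ ∨ t' i = s ⟨1, by omega⟩) →
      H tstar ≤ H t') := by
  have h0 : (0:ℕ) < n := by omega
  have h1 : (1:ℕ) < n := by omega
  have h2 : (2:ℕ) < n := by omega
  have hab : s ⟨0, h0⟩ < s ⟨1, h1⟩ := hs (by simp [Fin.mk_lt_mk])
  have hbc : s ⟨1, h1⟩ < s ⟨2, h2⟩ := hs (by simp [Fin.mk_lt_mk])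
  have hLG : 0 < (s ⟨2, h2⟩ - s ⟨0, h0⟩) * (s ⟨2, h2⟩ - s ⟨1, h1⟩) :=
    mul_pos (by linarith) (by linarith)
  have hbig : ∀ x : ℝ, (∃ j, x = s j) → x ≠ s ⟨0, h0⟩ → x ≠ s ⟨1, h1⟩ →
      (s ⟨2, h2⟩ - s ⟨0, h0⟩) * (s ⟨2, h2⟩ - s ⟨1, h1⟩) ≤
        (x - s ⟨0, h0⟩) * (x - s ⟨1, h1⟩) := by
    rintro x ⟨j, rfl⟩ hx0 hx1
    have hj : (⟨2, h2⟩ : Fin n) ≤ j := by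
      by_contra hlt
      push_neg at hlt
      have hj2 : j.val < 2 := hlt
      interval_cases hjv : j.val
      · exact hx0 (congrArg s (Fin.ext hjv))
      · exact hx1 (congrArg s (Fin.ext hjv))
    have hcx : s ⟨2, h2⟩ ≤ s j := hs.monotone hj
    exact mul_le_mul (by linarith) (by linarith) (by linarith) (by linarith)
  have hnn : ∀ x : ℝ, (∃ j, x = s j) → 0 ≤ (x - s ⟨0, h0⟩) * (x - s ⟨1, h1⟩) := by
    intro x hx
    by_cases hx0 : x = s ⟨0, h0⟩
    · simp [hx0]
    by_cases hx1 : x = s ⟨1, h1⟩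
    · simp [hx1]
    linarith [hbig x hx hx0 hx1]
  have hK0 : LH ≤ K :=
    le_trans (hLH (fun _ => s ⟨0, h0⟩) (fun _ => ⟨⟨0, h0⟩, rfl⟩))
      (hK _ (fun _ => Or.inl rfl))
  have hMpos : 0 ≤ M :=
    le_of_lt (lt_of_le_of_lt (div_nonneg (by linarith) hLG.le) hM)
  have hdiv : K - LH <
      M * ((s ⟨2, h2⟩ - s ⟨0, h0⟩) * (s ⟨2, h2⟩ - s ⟨1, h1⟩)) := by
    have := (div_lt_iff₀ hLG).mp hM
    linarith
  have hz : ∀ (u : Fin N → ℝ), (∀ i, u i = s ⟨0, h0⟩ ∨ u i = s ⟨1, h1⟩) →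
      ∑ i, (u i - s ⟨0, h0⟩) * (u i - s ⟨1, h1⟩) = 0 := by
    intro u hu
    apply Finset.sum_eq_zero
    intro i _
    rcases hu i with h | h <;> simp [h]
  have htv : ∀ i, tstar i = s ⟨0, h0⟩ ∨ tstar i = s ⟨1, h1⟩ := by
    by_contra hc
    push_neg at hc
    obtain ⟨i0, hi0, hi1⟩ := hc
    have hsum : (s ⟨2, h2⟩ - s ⟨0, h0⟩) * (s ⟨2, h2⟩ - s ⟨1, h1⟩) ≤
        ∑ i, (tstar i - s ⟨0, h0⟩) * (tstar i - s ⟨1, h1⟩) :=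
      le_trans (hbig _ (htstar i0) hi0 hi1)
        (Finset.single_le_sum (fun i _ => hnn _ (htstar i)) (Finset.mem_univ i0))
    have hcmp := hmin (fun _ => s ⟨0, h0⟩) (fun _ => ⟨⟨0, h0⟩, rfl⟩)
    rw [hz (fun _ => s ⟨0, h0⟩) (fun _ => Or.inl rfl)] at hcmp
    have hKb : H (fun _ => s ⟨0, h0⟩) ≤ K := hK _ (fun _ => Or.inl rfl)
    have hLb : LH ≤ H tstar := hLH tstar htstar
    have hmul : M * ((s ⟨2, h2⟩ - s ⟨0, h0⟩) * (s ⟨2, h2⟩ - s ⟨1, h1⟩)) ≤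
        M * ∑ i, (tstar i - s ⟨0, h0⟩) * (tstar i - s ⟨1, h1⟩) :=
      mul_le_mul_of_nonneg_left hsum hMpos
    linarith
  refine ⟨htv, fun t' ht' => ?_⟩
  have hcmp := hmin t' (fun i => (ht' i).elim (fun h => ⟨_, h⟩) (fun h => ⟨_, h⟩))
  rw [hz tstar htv, hz t' ht'] at hcmp
  linarith
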